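/- Let R be a commutative ring and let C be a radical divisible conservative system of R that is noetherian. Then every proper C-ideal I is the intersection of a finite set of prime C-ideals none of which contains another, and this finite set is unique: it equals the set of C-components of I, i.e. the minimal elements (with respect to inclusion) of the set of prime C-ideals containing I. -/

import Mathlib

/-- The division ideal `I : s = {r ∈ R | r * s ∈ I}`. -/
def idealDiv {R : Type*} [CommRing R] (I : Ideal R) (s : R) : Ideal R where
  carrier := {r : R | r * s ∈ I}
  zero_mem' := by simp
  add_mem' := by
    intro a b ha hb
    simpa [add_mul] using I.add_mem ha hb
  smul_mem' := by
    intro c a ha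
    simp only [Set.mem_setOf_eq, smul_eq_mul] at *
    rw [mul_assoc]
    exact I.mul_mem_left c ha

/-- A conservative system of ideals of a commutative ring: a collection of ideals closed
under intersections of arbitrary subfamilies (the empty intersection being `⊤ = R`) and
under unions (suprema) of nonempty chains. -/
structure ConservativeSystem (R : Type*) [CommRing R] where
  carrier : Set (Ideal R)
  sInf_mem : ∀ S : Set (Ideal R), S ⊆ carrier → sInf S ∈ carrier
  chain_sSup_mem : ∀ S : Set (Ideal R), S ⊆ carrier → S.Nonempty →
    IsChain (· ≤ ·) S → sSup S ∈ carrier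

variable {R : Type*} [CommRing R]

/-- The `C`-ideal `C`-generated by a subset `A ⊆ R`: the intersection of all `C`-ideals
containing `A`. -/
def ConservativeSystem.gen (C : ConservativeSystem R) (A : Set R) : Ideal R :=
  sInf {I : Ideal R | I ∈ C.carrier ∧ A ⊆ (I : Set R)}

/-- A conservative system is radical if all of its members are radical ideals. -/
def ConservativeSystem.IsRadicalSystem (C : ConservativeSystem R) : Prop :=
  ∀ I ∈ C.carrier, I.IsRadical

/-- A conservative system is divisible if it is closed under division of ideals by elements. -/
def ConservativeSystem.IsDivisible (C : ConservativeSystem R) : Prop :=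
  ∀ I ∈ C.carrier, ∀ s : R, idealDiv I s ∈ C.carrier

/-- A conservative system is noetherian if every ascending chain of `C`-ideals stabilizes. -/
def ConservativeSystem.IsNoetherianSystem (C : ConservativeSystem R) : Prop :=
  ∀ f : ℕ → Ideal R, (∀ n, f n ∈ C.carrier) → Monotone f → ∃ N, ∀ n, N ≤ n → f n = f N

/-- A `C`-ideal is finitely `C`-generated if it is `C`-generated by a finite set. -/
def ConservativeSystem.FinitelyGen (C : ConservativeSystem R) (I : Ideal R) : Prop :=
  ∃ Fs : Finset R, I = C.gen (↑Fs : Set R)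

/-! A noetherian system satisfies the maximum condition, so if some `C`-ideal were not a finite
intersection of prime `C`-ideals there would be a maximal such `M`. It is proper and not prime:
`a * b ∈ M` with `a, b ∉ M`. Divisibility and radicality give `M = (M : a) ∩ ⟨M, a⟩_C`, with both
factors strictly larger than `M`, hence decomposable, and so `M` is too.

Given any finite set `T` of prime `C`-ideals with intersection `I`, every prime `C`-ideal
containing `I` contains a member of `T`. So the `C`-components of `I` are the minimal elements
of `T`, which are all of `T` when `T` is an antichain. -/

theorem minimal_mem_iff_of_coinitial {α : Type*} [PartialOrder α] {s t : Set α} (hts : t ⊆ s)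
    (hcoinit : ∀ x ∈ s, ∃ y ∈ t, y ≤ x) {x : α} :
    Minimal (· ∈ s) x ↔ Minimal (· ∈ t) x := by
  constructor
  · intro hx
    obtain ⟨y, hyt, hyx⟩ := hcoinit x hx.prop
    rw [hx.eq_of_le (hts hyt) hyx] at hyt
    exact hx.mono hts hyt
  · intro hx
    refine ⟨hts hx.prop, fun z hzs hzx => ?_⟩
    obtain ⟨y, hyt, hyz⟩ := hcoinit z hzs
    exact (hx.le_of_le hyt (hyz.trans hzx)).trans hyz

theorem Set.Finite.sInf_setOf_minimal {α : Type*} [CompleteLattice α] {t : Set α}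
    (ht : t.Finite) : sInf {x | Minimal (· ∈ t) x} = sInf t := by
  refine le_antisymm (le_sInf fun y hy => ?_) (sInf_le_sInf fun x hx => hx.prop)
  obtain ⟨m, hmy, hm⟩ := ht.isPWO.exists_le_minimal hy
  exact sInf_le_of_le hm hmy

theorem Ideal.IsPrime.exists_le_of_sInf_le {P : Ideal R}
    (hP : P.IsPrime) {T : Set (Ideal R)} (hT : T.Finite) (h : sInf T ≤ P) :
    ∃ Q ∈ T, Q ≤ P := by
  rw [← hT.coe_toFinset, ← Finset.inf_id_eq_sInf, hP.inf_le'] at h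
  simpa using h

theorem mem_idealDiv {I : Ideal R} {s r : R} :
    r ∈ idealDiv I s ↔ r * s ∈ I :=
  Iff.rfl

theorem le_idealDiv (I : Ideal R) (s : R) : I ≤ idealDiv I s :=
  fun _ hr => I.mul_mem_right s hr

namespace ConservativeSystem

variable (C : ConservativeSystem R)

theorem gen_mem (A : Set R) : C.gen A ∈ C.carrier :=
  C.sInf_mem _ fun _ hI => hI.1

theorem subset_gen (A : Set R) : A ⊆ C.gen A :=
  fun _ ha => Ideal.mem_sInf.mpr fun _ hI => hI.2 ha

theorem gen_le {A : Set R} {I : Ideal R} (hI : I ∈ C.carrier) (hA : A ⊆ I) : C.gen A ≤ I :=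
  sInf_le ⟨hI, hA⟩

theorem IsNoetherianSystem.wellFoundedGT {C : ConservativeSystem R}
    (hnoeth : C.IsNoetherianSystem) : WellFoundedGT C.carrier := by
  rw [wellFoundedGT_iff_monotone_chain_condition]
  intro f
  obtain ⟨N, hN⟩ := hnoeth (fun n => f n) (fun n => (f n).2) fun _ _ hmn => f.monotone hmn
  exact ⟨N, fun m hm => Subtype.ext (hN m hm).symm⟩

variable {C}

theorem eq_idealDiv_inf_gen (hdiv : C.IsDivisible) {M : Ideal R} (hM : M ∈ C.carrier)
    (hMrad : M.IsRadical) (a : R) : M = idealDiv M a ⊓ C.gen (insert a M) := by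
  refine le_antisymm (le_inf (le_idealDiv M a) ((C.subset_gen _).trans' (Set.subset_insert _ _)))
    fun x hx => hMrad ⟨2, ?_⟩
  obtain ⟨hxa, hxgen⟩ := Ideal.mem_inf.mp hx
  have hgen : C.gen (insert a M) ≤ idealDiv M x := by
    refine C.gen_le (hdiv M hM x) (Set.insert_subset ?_ (le_idealDiv M x))
    rw [SetLike.mem_coe, mem_idealDiv, mul_comm]
    exact hxa
  rw [pow_two]
  exact hgen hxgen

theorem exists_lt_lt_eq_inf_of_not_isPrime (hrad : C.IsRadicalSystem) (hdiv : C.IsDivisible)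
    {M : Ideal R} (hM : M ∈ C.carrier) (hMtop : M ≠ ⊤) (hMprime : ¬ M.IsPrime) :
    ∃ A ∈ C.carrier, ∃ B ∈ C.carrier, M < A ∧ M < B ∧ M = A ⊓ B := by
  obtain ⟨a, ha, b, hb, hab⟩ :=
    (Ideal.not_isPrime_iff.mp hMprime).resolve_left hMtop
  refine ⟨idealDiv M a, hdiv M hM a, C.gen (insert a M), C.gen_mem _,
    SetLike.lt_iff_le_and_exists.mpr ⟨le_idealDiv M a, b, ?_, hb⟩,
    SetLike.lt_iff_le_and_exists.mpr
      ⟨(C.subset_gen _).trans' (Set.subset_insert _ _), a, C.subset_gen _ (Set.mem_insert _ _), ha⟩,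
    eq_idealDiv_inf_gen hdiv hM (hrad M hM) a⟩
  rw [mem_idealDiv, mul_comm]
  exact hab

theorem exists_finite_isPrime_sInf_eq (hrad : C.IsRadicalSystem) (hdiv : C.IsDivisible)
    (hnoeth : C.IsNoetherianSystem) {J : Ideal R} (hJ : J ∈ C.carrier) :
    ∃ S : Set (Ideal R), S.Finite ∧ (∀ P ∈ S, P ∈ C.carrier ∧ P.IsPrime) ∧ J = sInf S := by
  have := hnoeth.wellFoundedGT
  suffices ∀ J : C.carrier,
      ∃ S : Set (Ideal R), S.Finite ∧ (∀ P ∈ S, P ∈ C.carrier ∧ P.IsPrime) ∧ J.1 = sInf S from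
    this ⟨J, hJ⟩
  intro J
  induction J using WellFoundedGT.induction with
  | _ J ih =>
  obtain ⟨M, hM⟩ := J
  by_cases hMtop : M = ⊤
  · exact ⟨∅, Set.finite_empty, by simp, by simp [hMtop]⟩
  by_cases hMprime : M.IsPrime
  · exact ⟨{M}, Set.finite_singleton M, by simp [hM, hMprime], by simp⟩
  obtain ⟨A, hA, B, hB, hMA, hMB, hMAB⟩ :=
    exists_lt_lt_eq_inf_of_not_isPrime hrad hdiv hM hMtop hMprime
  obtain ⟨SA, hSAfin, hSA, hASA⟩ := ih ⟨A, hA⟩ hMA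
  obtain ⟨SB, hSBfin, hSB, hBSB⟩ := ih ⟨B, hB⟩ hMB
  refine ⟨SA ∪ SB, hSAfin.union hSBfin, fun P hP => hP.elim (hSA P) (hSB P), ?_⟩
  rw [sInf_union, ← hASA, ← hBSB]
  exact hMAB

variable (C)

def primesAbove (I : Ideal R) : Set (Ideal R) :=
  {P | P ∈ C.carrier ∧ P.IsPrime ∧ I ≤ P}

def components (I : Ideal R) : Set (Ideal R) :=
  {P | Minimal (· ∈ C.primesAbove I) P}

variable {C}

theorem mem_primesAbove {I P : Ideal R} :
    P ∈ C.primesAbove I ↔ P ∈ C.carrier ∧ P.IsPrime ∧ I ≤ P :=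
  Iff.rfl

theorem components_eq (I : Ideal R) :
    C.components I = {P : Ideal R | P ∈ C.carrier ∧ P.IsPrime ∧ I ≤ P ∧
      ∀ Q : Ideal R, Q ∈ C.carrier → Q.IsPrime → I ≤ Q → Q ≤ P → Q = P} := by
  ext P
  simp only [components, Set.mem_ofPred_eq, mem_primesAbove, minimal_iff, and_assoc]
  refine and_congr_right' <| and_congr_right' <| and_congr_right' ⟨?_, ?_⟩
  · exact fun h Q hQ hQprime hIQ hQP => (h ⟨hQ, hQprime, hIQ⟩ hQP).symm
  · exact fun h Q ⟨hQ, hQprime, hIQ⟩ hQP => (h Q hQ hQprime hIQ hQP).symm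

theorem components_eq_setOf_minimal {I : Ideal R} {T : Set (Ideal R)} (hT : T.Finite)
    (hTprime : ∀ P ∈ T, P ∈ C.carrier ∧ P.IsPrime) (hIT : I = sInf T) :
    C.components I = {P | Minimal (· ∈ T) P} := by
  refine Set.ext fun P => minimal_mem_iff_of_coinitial
    (fun Q hQ => mem_primesAbove.mpr ⟨(hTprime Q hQ).1, (hTprime Q hQ).2, hIT ▸ sInf_le hQ⟩) ?_
  rintro Q ⟨-, hQprime, hIQ⟩
  exact hQprime.exists_le_of_sInf_le hT (hIT ▸ hIQ)

end ConservativeSystem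

theorem decomposition_of_radical_conservative_general (C : ConservativeSystem R)
    (hrad : C.IsRadicalSystem) (hdiv : C.IsDivisible)
    (hnoeth : C.IsNoetherianSystem) (I : Ideal R) (hI : I ∈ C.carrier) :
    letI Comp : Set (Ideal R) := {P : Ideal R | P ∈ C.carrier ∧ P.IsPrime ∧ I ≤ P ∧
      ∀ Q : Ideal R, Q ∈ C.carrier → Q.IsPrime → I ≤ Q → Q ≤ P → Q = P}
    Comp.Finite ∧ I = sInf Comp ∧
      (∀ P ∈ Comp, ∀ Q ∈ Comp, P ≠ Q → ¬ P ≤ Q) ∧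
      (∀ T : Set (Ideal R), T.Finite →
        (∀ P ∈ T, P ∈ C.carrier ∧ P.IsPrime) →
        (∀ P ∈ T, ∀ Q ∈ T, P ≠ Q → ¬ P ≤ Q) → I = sInf T → T = Comp) := by
  rw [← C.components_eq I]
  obtain ⟨S, hSfin, hSprime, hIS⟩ :=
    ConservativeSystem.exists_finite_isPrime_sInf_eq hrad hdiv hnoeth hI
  have hS := ConservativeSystem.components_eq_setOf_minimal hSfin hSprime hIS
  refine ⟨hS ▸ hSfin.subset fun P hP => hP.prop, hS ▸ hSfin.sInf_setOf_minimal ▸ hIS,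
    hS ▸ setOfPred_minimal_antichain _, fun T hT hTprime hTanti hIT => ?_⟩
  rw [ConservativeSystem.components_eq_setOf_minimal hT hTprime hIT]
  exact Set.ext fun P => (IsAntichain.minimal_mem_iff hTanti).symm

/-- Let `C` be a noetherian radical divisible conservative system of a
commutative ring `R`. Then every proper `C`-ideal `I` is the intersection of the (finite) set
of its `C`-components (the minimal prime `C`-ideals containing `I`), these are pairwise
incomparable, and any finite set of pairwise incomparable prime `C`-ideals whose intersection
is `I` equals the set of `C`-components of `I`. -/
theorem decomposition_of_radical_conservative (C : ConservativeSystem R)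
    (hrad : C.IsRadicalSystem) (hdiv : C.IsDivisible)
    (hnoeth : C.IsNoetherianSystem) (I : Ideal R) (hI : I ∈ C.carrier) (hproper : I ≠ ⊤) :
    letI Comp : Set (Ideal R) := {P : Ideal R | P ∈ C.carrier ∧ P.IsPrime ∧ I ≤ P ∧
      ∀ Q : Ideal R, Q ∈ C.carrier → Q.IsPrime → I ≤ Q → Q ≤ P → Q = P}
    Comp.Finite ∧ I = sInf Comp ∧
      (∀ P ∈ Comp, ∀ Q ∈ Comp, P ≠ Q → ¬ P ≤ Q) ∧
      (∀ T : Set (Ideal R), T.Finite →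
        (∀ P ∈ T, P ∈ C.carrier ∧ P.IsPrime) →
        (∀ P ∈ T, ∀ Q ∈ T, P ≠ Q → ¬ P ≤ Q) → I = sInf T → T = Comp) :=
  decomposition_of_radical_conservative_general C hrad hdiv hnoeth I hI
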